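/- Under the contradiction minimization setup, as α → ∞ one has α A_α ∫_M u_α^p dv_g → 0. -/
import Mathlib


open MeasureTheory Real Filter Topology

noncomputable section

/-- The Euclidean Gagliardo–Nirenberg inequality on `ℝ^n` with constant `A`, stated on
smooth compactly supported functions (which are dense in the completion `D^{p,q}(ℝ^n)`
of `C_0^∞(ℝ^n)` under `‖∇u‖_p + ‖u‖_q`). -/
def euclGNValid (n : ℕ) (p q r θ A : ℝ) : Prop :=
  ∀ u : EuclideanSpace ℝ (Fin n) → ℝ, ContDiff ℝ (⊤ : ℕ∞) u → HasCompactSupport u →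
    (∫ x, |u x| ^ r) ^ (p / (r * θ)) ≤
      A * (∫ x, ‖fderiv ℝ u x‖ ^ p) * (∫ x, |u x| ^ q) ^ (p * (1 - θ) / (θ * q))

/-- The best (smallest) constant `A(p,q,r)` in the Euclidean Gagliardo–Nirenberg
inequality on `ℝ^n`. -/
def euclBestConst (n : ℕ) (p q r θ : ℝ) : ℝ :=
  sInf {A : ℝ | euclGNValid n p q r θ A}

/-- The constraint set `E = {u ∈ D^{p,q}(M) : ‖u‖_{L^r(M)} = 1}`. -/
def Econstraint {M : Type*} [MeasurableSpace M] (vol : Measure M)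
    (D : Set (M → ℝ)) (r : ℝ) : Set (M → ℝ) :=
  {u | u ∈ D ∧ (∫ x, |u x| ^ r ∂vol) ^ (1 / r) = 1}

/-- The functional
`J_α(u) = (∫_M |∇_g u|^p dv_g + α ∫_M |u|^p dv_g)(∫_M |u|^q dv_g)^(p(1-θ)/(θq))`. -/
def Jfunc {M : Type*} [MeasurableSpace M] (vol : Measure M)
    (grad : (M → ℝ) → M → ℝ) (p q θ α : ℝ) (u : M → ℝ) : ℝ :=
  ((∫ x, grad u x ^ p ∂vol) + α * ∫ x, |u x| ^ p ∂vol) *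
    (∫ x, |u x| ^ q ∂vol) ^ (p * (1 - θ) / (θ * q))

/-- The coefficient `A_α = (∫_M u_α^q dv_g)^(p(1-θ)/(θq))`. -/
def Acoef {M : Type*} [MeasurableSpace M] (vol : Measure M)
    (p q θ : ℝ) (u : M → ℝ) : ℝ :=
  (∫ x, u x ^ q ∂vol) ^ (p * (1 - θ) / (θ * q))

/-- The coefficient
`B_α = (∫_M |∇_g u_α|^p dv_g + α ∫_M u_α^p dv_g)(∫_M u_α^q dv_g)^(p(1-θ)/(θq) - 1)`. -/
def Bcoef {M : Type*} [MeasurableSpace M] (vol : Measure M)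
    (grad : (M → ℝ) → M → ℝ) (p q θ α : ℝ) (u : M → ℝ) : ℝ :=
  ((∫ x, grad u x ^ p ∂vol) + α * ∫ x, u x ^ p ∂vol) *
    (∫ x, u x ^ q ∂vol) ^ (p * (1 - θ) / (θ * q) - 1)

/-- First step, part (c): in the contradiction minimization setup,
`α A_α ∫_M u_α^p dv_g → 0` as `α → ∞`. -/
theorem first_step_c
    (n : ℕ) (hn : 2 ≤ n)
    {M : Type*} [MetricSpace M] [CompactSpace M] [MeasurableSpace M] [Nonempty M]
    (vol : Measure M) (grad : (M → ℝ) → M → ℝ) (D : Set (M → ℝ))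
    (p q r θ : ℝ)
    (hcase : (1 < p ∧ p ≤ 2 ∧ p < r ∧ 1 ≤ q ∧ q < r ∧ (p < n → r < n * p / (n - p))) ∨
      (p = r ∧ 1 < p ∧ 1 ≤ q ∧ p ^ 2 / 2 ≤ q ∧ q < p))
    (hθ : θ = n * p * (r - q) / (r * (q * (p - n) + n * p)))
    (u : ℝ → M → ℝ)
    (humem : ∀ α : ℝ, 0 < α → u α ∈ Econstraint vol D r)
    (hupos : ∀ α : ℝ, 0 < α → ∀ x, 0 ≤ u α x)
    (hν : ∀ α : ℝ, 0 < α →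
      Jfunc vol grad p q θ α (u α) < (euclBestConst n p q r θ)⁻¹)
    (humin : ∀ α : ℝ, 0 < α → ∀ v ∈ Econstraint vol D r,
      Jfunc vol grad p q θ α (u α) ≤ Jfunc vol grad p q θ α v)
    :
    Tendsto (fun α : ℝ =>
        α * (Acoef vol p q θ (u α) * ∫ x, u α x ^ p ∂vol))
      atTop (𝓝 0) := by

  classical
  -- abbreviations
  set T : ℝ → ℝ := fun α => Acoef vol p q θ (u α) * ∫ x, u α x ^ p ∂vol with hT
  set g : ℝ → ℝ := fun α => Jfunc vol grad p q θ α (u α) with hg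
  -- nonnegativity of T for positive α
  have hTnonneg : ∀ α : ℝ, 0 < α → 0 ≤ T α := by
    intro α hα
    have h1 : 0 ≤ ∫ x, u α x ^ q ∂vol :=
      integral_nonneg fun x => Real.rpow_nonneg (hupos α hα x) q
    have h2 : 0 ≤ ∫ x, u α x ^ p ∂vol :=
      integral_nonneg fun x => Real.rpow_nonneg (hupos α hα x) p
    exact mul_nonneg (Real.rpow_nonneg h1 _) h2
  -- key inequality
  have hkey : ∀ α β : ℝ, 0 < α → 0 < β → g α ≤ g β + (α - β) * T β := by
    intro α β hα hβ
    have h := humin α hα (u β) (humem β hβ)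
    refine h.trans_eq ?_
    have hp' : (∫ x, |u β x| ^ p ∂vol) = ∫ x, u β x ^ p ∂vol :=
      integral_congr_ae (Eventually.of_forall fun x => by
        simp [abs_of_nonneg (hupos β hβ x)])
    have hq' : (∫ x, |u β x| ^ q ∂vol) = ∫ x, u β x ^ q ∂vol :=
      integral_congr_ae (Eventually.of_forall fun x => by
        simp [abs_of_nonneg (hupos β hβ x)])
    simp only [hg, hT, Jfunc, Acoef, hp', hq']
    ring
  -- monotone auxiliary function
  set f : ℝ → ℝ := fun α => g (max α 1) with hf
  have hposmax : ∀ a : ℝ, (0:ℝ) < max a 1 := fun a =>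
    lt_of_lt_of_le one_pos (le_max_right _ _)
  have hmono : Monotone f := by
    intro a b hab
    have h1 := hposmax a
    have h2 := hposmax b
    have hk := hkey (max a 1) (max b 1) h1 h2
    have hle : max a 1 ≤ max b 1 := max_le_max hab le_rfl
    have hTb := hTnonneg (max b 1) h2
    have : (max a 1 - max b 1) * T (max b 1) ≤ 0 :=
      mul_nonpos_of_nonpos_of_nonneg (by linarith) hTb
    simpa [hf] using hk.trans (by linarith)
  have hbdd : BddAbove (Set.range f) := by
    refine ⟨(euclBestConst n p q r θ)⁻¹, ?_⟩
    rintro _ ⟨a, rfl⟩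
    exact (hν _ (hposmax a)).le
  have htend : Tendsto f atTop (𝓝 (⨆ a, f a)) := tendsto_atTop_ciSup hmono hbdd
  have hdivtop : Tendsto (fun β : ℝ => β / 2) atTop atTop :=
    Tendsto.atTop_div_const two_pos tendsto_id
  have hhalf : Tendsto (fun β : ℝ => f (β / 2)) atTop (𝓝 (⨆ a, f a)) :=
    htend.comp hdivtop
  have hdiff : Tendsto (fun β : ℝ => 2 * (f β - f (β / 2))) atTop (𝓝 0) := by
    have := (htend.sub hhalf).const_mul (2 : ℝ)
    simpa using this
  refine squeeze_zero' ?_ ?_ hdiff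
  · filter_upwards [eventually_ge_atTop (2 : ℝ)] with α hα
    exact mul_nonneg (by linarith) (hTnonneg α (by linarith))
  · filter_upwards [eventually_ge_atTop (2 : ℝ)] with α hα
    have h0 : (0:ℝ) < α := by linarith
    have h2 : (0:ℝ) < α / 2 := by linarith
    have hfα : f α = g α := by rw [hf]; simp [max_eq_left (by linarith : (1:ℝ) ≤ α)]
    have hfα2 : f (α / 2) = g (α / 2) := by
      rw [hf]; simp [max_eq_left (by linarith : (1:ℝ) ≤ α / 2)]
    have hk := hkey (α / 2) α h2 h0
    rw [hfα, hfα2]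
    show α * T α ≤ 2 * (g α - g (α / 2))
    linarith [hk]
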